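/- arXiv:2101.09390 — 7 statements merged into one kernel-verified Lean document; each statement's English description precedes it below -/
import Mathlib

section
/- The integer 164634913 satisfies 44^6 + 117^6 = 164634913 · 5^6 (equivalently (44/5)^6 + (117/5)^6 = 164634913 in ℚ), and there are no integers c, d with c^6 + d^6 = 164634913. -/
lemma aux164634913 : ∀ a : ℕ, a < 24 → ∀ b : ℕ, b < 24 → a ^ 6 + b ^ 6 ≠ 164634913 := by
  decide

/-- `44^6 + 117^6 = 164634913 · 5^6` (equivalently `(44/5)^6 + (117/5)^6 = 164634913` in `ℚ`),
and `164634913` is not a sum of two integer sixth powers. -/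
theorem sum_164634913 :
    ((44 : ℤ) ^ 6 + 117 ^ 6 = 164634913 * 5 ^ 6 ∧
      ((44 : ℚ) / 5) ^ 6 + ((117 : ℚ) / 5) ^ 6 = 164634913) ∧
    ¬ ∃ c d : ℤ, c ^ 6 + d ^ 6 = 164634913 := by
  refine ⟨⟨by norm_num, by norm_num⟩, ?_⟩
  rintro ⟨c, d, h⟩
  have hc : (c.natAbs : ℤ) ^ 6 = c ^ 6 := by
    rcases Int.natAbs_eq c with h' | h' <;> (conv_rhs => rw [h']) <;> ring
  have hd : (d.natAbs : ℤ) ^ 6 = d ^ 6 := by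
    rcases Int.natAbs_eq d with h' | h' <;> (conv_rhs => rw [h']) <;> ring
  have hnat : c.natAbs ^ 6 + d.natAbs ^ 6 = 164634913 := by
    have : (c.natAbs : ℤ) ^ 6 + (d.natAbs : ℤ) ^ 6 = 164634913 := by rw [hc, hd]; exact h
    exact_mod_cast this
  have hca : c.natAbs < 24 := by
    by_contra hle
    push_neg at hle
    have : 24 ^ 6 ≤ c.natAbs ^ 6 := Nat.pow_le_pow_left hle 6
    omega
  have hda : d.natAbs < 24 := by
    by_contra hle
    push_neg at hle
    have : 24 ^ 6 ≤ d.natAbs ^ 6 := Nat.pow_le_pow_left hle 6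
    omega
  exact aux164634913 _ hca _ hda hnat
end

section
/- Let t be an integer and set f₁ = (2863 + 10764t)/13 and f₂ = (1207 + 26455t)/13 as rational numbers. Then f₁^6 + f₂^6 is an integer, and there are no integers c, d with c^6 + d^6 = f₁^6 + f₂^6. In particular, f₁^6 + f₂^6 is an integer that is a sum of two rational sixth powers but not a sum of two integer sixth powers. -/
/-! Sixth powers modulo 13 are `0` or `±1`, so a sum of two integer sixth powers is
congruent to one of `0, ±1, ±2` modulo 13. The numerators `a = 2863 + 10764t` and
`b = 1207 + 26455t` satisfy `a⁶ + b⁶ ≡ 5 · 13⁶ (mod 13⁷)`, so `f₁⁶ + f₂⁶` is an integer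
congruent to `5` modulo 13. -/

theorem ZMod.sixth_pow_add_sixth_pow_ne_five : ∀ x y : ZMod 13, x ^ 6 + y ^ 6 ≠ 5 := by
  decide

theorem Int.not_exists_sixth_pow_add_sixth_pow_eq_of_modEq_five {k : ℤ} (hk : k ≡ 5 [ZMOD 13]) :
    ¬ ∃ c d : ℤ, c ^ 6 + d ^ 6 = k := by
  rintro ⟨c, d, rfl⟩
  have hmod : ((c ^ 6 + d ^ 6 : ℤ) : ZMod 13) = ((5 : ℤ) : ZMod 13) :=
    (ZMod.intCast_eq_intCast_iff _ _ 13).mpr hk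
  push_cast at hmod
  exact ZMod.sixth_pow_add_sixth_pow_ne_five c d hmod

/-- The integer `(a⁶ + b⁶) / 13⁶` for `a = 2863 + 10764t`, `b = 1207 + 26455t`. -/
def sixthPowerFamily (t : ℤ) : ℤ :=
  5 + 13 * (8825842511889 + 204463394631366 * t + 2215974468895395 * t ^ 2
    + 19705491956080580 * t ^ 3 + 196886285342613555 * t ^ 4
    + 1535084006740041966 * t ^ 5 + 5487937890605386333 * t ^ 6)

theorem sixthPowerFamily_modEq_five (t : ℤ) : sixthPowerFamily t ≡ 5 [ZMOD 13] := by
  rw [sixthPowerFamily, Int.ModEq, Int.add_mul_emod_self_left]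

theorem cast_sixthPowerFamily (t : ℤ) :
    (((2863 + 10764 * t : ℤ) : ℚ) / 13) ^ 6 + (((1207 + 26455 * t : ℤ) : ℚ) / 13) ^ 6
      = (sixthPowerFamily t : ℚ) := by
  rw [sixthPowerFamily]
  push_cast
  ring

/-- For every integer `t`, with `f₁ = (2863 + 10764t)/13` and `f₂ = (1207 + 26455t)/13`
in `ℚ`, the rational number `f₁^6 + f₂^6` is an integer that is not a sum of two integer
sixth powers (and it is, manifestly, a sum of two rational sixth powers). -/
theorem family_not_sum_of_two_integer_sixth_powers (t : ℤ) :
    ∃ k : ℤ,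
      (((2863 + 10764 * t : ℤ) : ℚ) / 13) ^ 6 + (((1207 + 26455 * t : ℤ) : ℚ) / 13) ^ 6
        = (k : ℚ) ∧
      ¬ ∃ c d : ℤ, c ^ 6 + d ^ 6 = k :=
  ⟨sixthPowerFamily t, cast_sixthPowerFamily t,
    Int.not_exists_sixth_pow_add_sixth_pow_eq_of_modEq_five (sixthPowerFamily_modEq_five t)⟩
end

section
/- For every integer t, the integer ((2863 + 10764t)^6 + (1207 + 26455t)^6) / 13^6 is congruent to 5 modulo 13. -/
/-- For every integer `t`, `((2863 + 10764t)^6 + (1207 + 26455t)^6) / 13^6 ≡ 5 (mod 13)`. -/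
theorem quotient_cong_five_mod_thirteen (t : ℤ) :
    ((2863 + 10764 * t) ^ 6 + (1207 + 26455 * t) ^ 6) / 13 ^ 6 ≡ 5 [ZMOD 13] := by
  have h : ((2863 + 10764 * t) ^ 6 + (1207 + 26455 * t) ^ 6) =
      13 ^ 6 * (114735952654562 + 2658024130207758 * t + 28807668095640135 * t ^ 2 +
        256171395429047540 * t ^ 3 + 2559521709453976215 * t ^ 4 +
        19956092087620545558 * t ^ 5 + 71343192577870022329 * t ^ 6) := by ring
  rw [h, Int.mul_ediv_cancel_left _ (by norm_num)]
  have : (13 : ℤ) ∣ (114735952654562 + 2658024130207758 * t + 28807668095640135 * t ^ 2 +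
        256171395429047540 * t ^ 3 + 2559521709453976215 * t ^ 4 +
        19956092087620545558 * t ^ 5 + 71343192577870022329 * t ^ 6) - 5 :=
    ⟨8825842511889 + 204463394631366 * t + 2215974468895395 * t ^ 2 +
      19705491956080580 * t ^ 3 + 196886285342613555 * t ^ 4 +
      1535084006740041966 * t ^ 5 + 5487937890605386333 * t ^ 6, by ring⟩
  exact (Int.ModEq.symm (Int.modEq_iff_dvd.mpr (by simpa using this)))
end

section
/- Let k be a positive sixth-power-free integer and let p be a prime with p ≡ 3 (mod 4) and p ∣ k. Then there do not exist x, y, z ∈ ℚ_p, not all zero, with x^6 + y^6 = k·z^6. -/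
/-!
Since `-1` is not a square mod `p`, for `‖u‖ ≤ 1` the residue of `u ^ 6 + 1` is
nonzero, so `‖u ^ 6 + 1‖ = 1` and
`‖x ^ 6 + y ^ 6‖ = max (‖x‖ ^ 6) (‖y‖ ^ 6)`: the valuation of `x ^ 6 + y ^ 6` is a multiple of `6`.
The valuation of `k z ^ 6` is `v_p(k) + 6 v(z)`, and `1 ≤ v_p(k) ≤ 5` because `p ∣ k` and `k` is
sixth-power-free.
-/

theorem ZMod.pow_ne_neg_one_of_even {p n : ℕ} [Fact p.Prime] (hp : p % 4 = 3) (hn : Even n)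
    (a : ZMod p) : a ^ n ≠ -1 := by
  obtain ⟨m, rfl⟩ := hn
  intro h
  exact ZMod.exists_sq_eq_neg_one_iff.mp ⟨a ^ m, by rw [← h, pow_add]⟩ hp

theorem PadicInt.norm_pow_add_one_of_even {p n : ℕ} [Fact p.Prime] (hp : p % 4 = 3)
    (hn : Even n) (u : ℤ_[p]) : ‖u ^ n + 1‖ = 1 := by
  rw [← PadicInt.isUnit_iff, ← mem_nonunits_iff.not_left, ← IsLocalRing.mem_maximalIdeal,
    ← PadicInt.ker_toZMod, RingHom.mem_ker, map_add, map_pow, map_one, ← eq_neg_iff_add_eq_zero]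
  exact ZMod.pow_ne_neg_one_of_even hp hn _

theorem Padic.norm_pow_add_one_of_even {p n : ℕ} [Fact p.Prime] (hp : p % 4 = 3)
    (hn : Even n) {u : ℚ_[p]} (hu : ‖u‖ ≤ 1) : ‖u ^ n + 1‖ = 1 :=
  PadicInt.norm_pow_add_one_of_even hp hn ⟨u, hu⟩

theorem Padic.norm_pow_add_pow_of_even {p n : ℕ} [Fact p.Prime] (hp : p % 4 = 3)
    (hn : Even n) (x y : ℚ_[p]) : ‖x ^ n + y ^ n‖ = max (‖x‖ ^ n) (‖y‖ ^ n) := by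
  wlog hyx : ‖y‖ ≤ ‖x‖ generalizing x y
  · rw [add_comm, max_comm]
    exact this y x (le_of_not_ge hyx)
  have hu : ‖y / x‖ ≤ 1 := by
    rw [norm_div]; exact div_le_one_of_le₀ hyx (norm_nonneg x)
  have hsplit : x ^ n + y ^ n = x ^ n * ((y / x) ^ n + 1) := by
    rcases eq_or_ne x 0 with rfl | hx
    · obtain rfl : y = 0 := norm_le_zero_iff.mp (by simpa using hyx)
      rw [div_zero, mul_add, mul_one, ← mul_pow, zero_mul]
    · rw [div_pow, mul_add, mul_div_cancel₀ _ (pow_ne_zero n hx), mul_one, add_comm]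
  rw [hsplit, norm_mul, Padic.norm_pow_add_one_of_even hp hn hu, norm_pow,
    mul_one, max_eq_left (pow_le_pow_left₀ (norm_nonneg y) hyx n)]

theorem padicValNat_lt_of_forall_pow_not_dvd {p k n : ℕ} [hp : Fact p.Prime]
    (hfree : ¬ ∃ m : ℕ, 1 < m ∧ m ^ n ∣ k) : padicValNat p k < n := by
  by_contra! h
  exact hfree ⟨p, hp.out.one_lt, (pow_dvd_pow p h).trans pow_padicValNat_dvd⟩

theorem Padic.norm_natCast_ne_norm_pow {p k n : ℕ} [Fact p.Prime] (hk : k ≠ 0)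
    (hkn : ¬ n ∣ padicValNat p k) {t : ℚ_[p]} (ht : t ≠ 0) : ‖(k : ℚ_[p])‖ ≠ ‖t‖ ^ n := by
  intro h
  rw [← norm_pow, Padic.norm_eq_zpow_neg_valuation (Nat.cast_ne_zero.mpr hk),
    Padic.norm_eq_zpow_neg_valuation (pow_ne_zero n ht)] at h
  have hp : (1 : ℝ) < p := by exact_mod_cast (Fact.out : p.Prime).one_lt
  have := zpow_right_injective₀ (by positivity) hp.ne' h
  rw [Padic.valuation_natCast, Padic.valuation_pow] at this
  exact hkn (Int.natCast_dvd_natCast.mp ⟨t.valuation, neg_inj.mp this⟩)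

/-- If `k` is a positive sixth-power-free integer and `p` is a prime with `p ≡ 3 (mod 4)`
and `p ∣ k`, then `x^6 + y^6 = k·z^6` has no nontrivial solution over `ℚ_p`. -/
theorem not_solvable_at_three_mod_four (k : ℕ) (hk : 0 < k)
    (hsf : ¬ ∃ m : ℕ, 1 < m ∧ m ^ 6 ∣ k) (p : ℕ) [Fact p.Prime]
    (hp : p % 4 = 3) (hpk : p ∣ k) :
    ¬ ∃ x y z : ℚ_[p], ¬(x = 0 ∧ y = 0 ∧ z = 0) ∧ x ^ 6 + y ^ 6 = (k : ℚ_[p]) * z ^ 6 := by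
  rintro ⟨x, y, z, hxyz, heq⟩
  have hval : ¬ 6 ∣ padicValNat p k := by
    have := one_le_padicValNat_of_dvd hk.ne' hpk
    have := padicValNat_lt_of_forall_pow_not_dvd (p := p) hsf
    omega
  have hnorm : max (‖x‖ ^ 6) (‖y‖ ^ 6) = ‖(k : ℚ_[p])‖ * ‖z‖ ^ 6 := by
    rw [← Padic.norm_pow_add_pow_of_even hp (by decide), heq, norm_mul, norm_pow]
  rcases eq_or_ne z 0 with rfl | hz
  · rw [norm_zero, zero_pow (by norm_num), mul_zero] at hnorm
    have hx : ‖x‖ ^ 6 = 0 := le_antisymm (hnorm ▸ le_max_left _ _) (by positivity)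
    have hy : ‖y‖ ^ 6 = 0 := le_antisymm (hnorm ▸ le_max_right _ _) (by positivity)
    exact hxyz ⟨by simpa using hx, by simpa using hy, rfl⟩
  obtain ⟨w, hw⟩ : ∃ w : ℚ_[p], ‖w‖ ^ 6 = ‖(k : ℚ_[p])‖ * ‖z‖ ^ 6 :=
    (max_choice (‖x‖ ^ 6) (‖y‖ ^ 6)).elim (fun h => ⟨x, h ▸ hnorm⟩) (fun h => ⟨y, h ▸ hnorm⟩)
  have hw0 : w ≠ 0 := by
    rintro rfl
    simp [hk.ne', hz] at hw
  apply Padic.norm_natCast_ne_norm_pow hk.ne' hval (div_ne_zero hw0 hz)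
  rw [norm_div, div_pow, hw, mul_div_cancel_right₀ _ (by positivity)]
end

section
/- Let k be a positive integer and let p be a prime with p > 400 such that p does not divide 6k. Then there exist x, y, z ∈ ℤ/pℤ, not all zero, with x^6 + y^6 = k·z^6. -/
/-!
Write `c(a)` for the number of `n`-th roots of `a` in a finite field with `q` elements; then
`c(a) = [a = 0] + ∑ χ a` over the characters `χ` of order dividing `n`. Expanding the number
`∑ₐ c(a) c(k - a)` of pairs with `x ^ n + y ^ n = k` turns it into a sum of Jacobi sums
`J(χ, ψ)`. Those with `χ`, `ψ` or `χ ψ` trivial are explicit and add up to `q + 1 - c(-1)`,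
where `c(-1)` counts the points at infinity of the projective curve, and each of the at most
`(n - 1)(n - 2)` others has absolute value `√q`. For `n = 6` and `q = p > 400`, a curve without
points would give `p + 1 ≤ 20 √p`, which is false.
-/

open Finset Polynomial

section nthRoots

variable {K : Type*} [Field K] {n : ℕ}

lemma card_nthRootsFinset_le (n : ℕ) (a : K) : #(nthRootsFinset n a) ≤ n := by
  classical
  exact (nthRootsFinset_def n a ▸ Multiset.toFinset_card_le _).trans (card_nthRoots n a)

lemma nthRootsFinset_zero_right (hn : n ≠ 0) : nthRootsFinset n (0 : K) = {0} := by
  ext x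
  simp [mem_nthRootsFinset (Nat.pos_of_ne_zero hn), hn]

lemma card_nthRootsFinset_pow (hn : n ≠ 0) {b : K} (hb : b ≠ 0) :
    #(nthRootsFinset n (b ^ n)) = #(nthRootsFinset n (1 : K)) := by
  refine card_nbij' (· * b⁻¹) (· * b) (fun x hx ↦ ?_) (fun y hy ↦ ?_)
    (fun x _ ↦ by simp [hb]) (fun y _ ↦ by simp [hb])
  · simp_all [mem_nthRootsFinset (Nat.pos_of_ne_zero hn), mul_pow, inv_pow]
  · simp_all [mem_nthRootsFinset (Nat.pos_of_ne_zero hn), mul_pow]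

end nthRoots

section FiniteField

variable {F : Type*} [Field F] [Fintype F] {n : ℕ}

noncomputable instance : Fintype (MulChar F ℂ) := Fintype.ofFinite _

noncomputable instance : DecidableEq (MulChar F ℂ) := Classical.decEq _

lemma MulChar.norm_apply_eq_one (χ : MulChar F ℂ) {a : F} (ha : a ≠ 0) : ‖χ a‖ = 1 := by
  have hq : Fintype.card F - 1 ≠ 0 := by
    have := Fintype.one_lt_card (α := F)
    omega
  refine (pow_eq_one_iff_of_nonneg (norm_nonneg _) hq).mp ?_
  rw [← norm_pow, ← map_pow, FiniteField.pow_card_sub_one_eq_one a ha, map_one, norm_one]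

lemma sum_apply_mul_apply_sub {R : Type*} [CommRing R] (χ ψ : MulChar F R) {k : F} (hk : k ≠ 0) :
    ∑ a, χ a * ψ (k - a) = (χ * ψ) k * jacobiSum χ ψ := by
  rw [jacobiSum, mul_sum, ← Equiv.sum_comp (Equiv.mulLeft₀ k hk)]
  refine sum_congr rfl fun t _ ↦ ?_
  rw [Equiv.mulLeft₀_apply, MulChar.mul_apply, show k - k * t = k * (1 - t) by ring, map_mul,
    map_mul]
  ring

lemma norm_jacobiSum {χ ψ : MulChar F ℂ} (hχ : χ ≠ 1) (hψ : ψ ≠ 1) (hχψ : χ * ψ ≠ 1) :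
    ‖jacobiSum χ ψ‖ = √(Fintype.card F) := by
  have hchar : ringChar ℂ ≠ ringChar F := by
    rw [ringChar.eq_zero]
    exact (CharP.char_ne_zero_of_finite F (ringChar F)).symm
  have hconj : jacobiSum χ⁻¹ ψ⁻¹ = star (jacobiSum χ ψ) := by
    simp only [jacobiSum, star_sum, star_mul', MulChar.star_apply']
  have h := jacobiSum_mul_jacobiSum_inv hchar hχ hψ hχψ
  rw [hconj, Complex.star_def, Complex.mul_conj, ← Complex.ofReal_natCast,
    Complex.ofReal_inj] at h
  rw [Complex.norm_def, h]

variable (F) in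
noncomputable def mulCharsOfOrderDvd (n : ℕ) : Finset (MulChar F ℂ) := {χ | χ ^ n = 1}

variable {χ : MulChar F ℂ}

@[simp]
lemma mem_mulCharsOfOrderDvd : χ ∈ mulCharsOfOrderDvd F n ↔ χ ^ n = 1 := by
  simp [mulCharsOfOrderDvd]

lemma one_mem_mulCharsOfOrderDvd : (1 : MulChar F ℂ) ∈ mulCharsOfOrderDvd F n := by simp

lemma inv_mem_mulCharsOfOrderDvd (hχ : χ ∈ mulCharsOfOrderDvd F n) :
    χ⁻¹ ∈ mulCharsOfOrderDvd F n := by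
  simp_all [inv_pow]

lemma mul_mem_mulCharsOfOrderDvd {ψ : MulChar F ℂ} (hχ : χ ∈ mulCharsOfOrderDvd F n)
    (hψ : ψ ∈ mulCharsOfOrderDvd F n) : χ * ψ ∈ mulCharsOfOrderDvd F n := by
  simp_all [mul_pow]

lemma apply_pow_eq_one (hn : n ≠ 0) (hχ : χ ∈ mulCharsOfOrderDvd F n) {b : F} (hb : b ≠ 0) :
    χ (b ^ n) = 1 := by
  rw [map_pow, ← χ.pow_apply' hn, mem_mulCharsOfOrderDvd.mp hχ, MulChar.one_apply hb.isUnit]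

lemma card_mulCharsOfOrderDvd (hn : n ≠ 0) :
    #(mulCharsOfOrderDvd F n) = #(nthRootsFinset n (1 : F)) := by
  classical
  obtain ⟨e⟩ := MulChar.mulEquiv_units F ℂ
  have hn' := Nat.pos_of_ne_zero hn
  calc #(mulCharsOfOrderDvd F n) = #{u : Fˣ | u ^ n = 1} :=
        card_equiv e.toEquiv fun χ ↦ by simp [← map_pow, e.map_eq_one_iff]
    _ = #(nthRootsFinset n (1 : F)) := by
        refine card_bij (fun u _ ↦ (u : F)) (fun u hu ↦ ?_) (fun _ _ _ _ ↦ Units.ext)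
          (fun x hx ↦ ?_)
        · simp_all [mem_nthRootsFinset hn', ← Units.val_pow_eq_pow_val]
        · rw [mem_nthRootsFinset hn'] at hx
          have hx0 : x ≠ 0 := by
            rintro rfl
            simp [hn] at hx
          exact ⟨Units.mk0 x hx0, by simp [Units.ext_iff, hx], rfl⟩

lemma exists_mem_mulCharsOfOrderDvd_apply_ne_one {a : F} (ha : a ≠ 0) (h : ∀ b : F, b ^ n ≠ a) :
    ∃ χ ∈ mulCharsOfOrderDvd F n, χ a ≠ 1 := by
  let H := (powMonoidHom n : Fˣ →* Fˣ).range
  have hH : ha.isUnit.unit ∉ H := by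
    rintro ⟨u, hu⟩
    exact h u (by simpa [Units.ext_iff] using hu)
  rw [← (MulChar.subgroupOrderIsoSubgroupMulChar F ℂ).symm_apply_apply H,
    ← OrderDual.toDual_ofDual (MulChar.subgroupOrderIsoSubgroupMulChar F ℂ H),
    MulChar.mem_subgroupOrderIsoSubgroupMulChar_symm_iff] at hH
  obtain ⟨χ, hχ, hχa⟩ := not_forall₂.mp hH
  refine ⟨χ, mem_mulCharsOfOrderDvd.mpr (MulChar.ext fun u ↦ ?_), by simpa using hχa⟩
  rw [MulChar.pow_apply_coe, MulChar.one_apply_coe]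
  simpa using MulChar.mem_subgroupOrderIsoSubgroupMulChar_iff.mp hχ (u ^ n) ⟨u, rfl⟩

lemma sum_mulCharsOfOrderDvd_apply (hn : n ≠ 0) {a : F} (ha : a ≠ 0) :
    ∑ χ ∈ mulCharsOfOrderDvd F n, χ a = #(nthRootsFinset n a) := by
  by_cases hroot : ∃ b : F, b ^ n = a
  · obtain ⟨b, rfl⟩ := hroot
    have hb : b ≠ 0 := by
      rintro rfl
      simp [hn] at ha
    rw [sum_congr rfl fun χ hχ ↦ apply_pow_eq_one hn hχ hb, sum_const, nsmul_one,
      card_nthRootsFinset_pow hn hb, card_mulCharsOfOrderDvd hn]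
  · push Not at hroot
    obtain ⟨χ₁, hχ₁, hχ₁a⟩ := exists_mem_mulCharsOfOrderDvd_apply_ne_one ha hroot
    have hempty : nthRootsFinset n a = ∅ := by
      ext x
      simp [mem_nthRootsFinset (Nat.pos_of_ne_zero hn), hroot x]
    have hshift : χ₁ a * ∑ χ ∈ mulCharsOfOrderDvd F n, χ a =
        ∑ χ ∈ mulCharsOfOrderDvd F n, χ a := by
      rw [mul_sum]
      refine sum_nbij' (χ₁ * ·) (χ₁⁻¹ * ·) (fun χ hχ ↦ mul_mem_mulCharsOfOrderDvd hχ₁ hχ)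
        (fun χ hχ ↦ mul_mem_mulCharsOfOrderDvd (inv_mem_mulCharsOfOrderDvd hχ₁) hχ)
        (fun χ _ ↦ inv_mul_cancel_left χ₁ χ) (fun χ _ ↦ mul_inv_cancel_left χ₁ χ)
        (fun χ _ ↦ MulChar.mul_apply ..)
    rw [hempty, card_empty, Nat.cast_zero]
    exact eq_zero_of_mul_eq_self_left hχ₁a hshift

lemma sum_jacobiSum_one {k : F} (hk : k ≠ 0) :
    ∑ ψ ∈ mulCharsOfOrderDvd F n, (1 * ψ) k * jacobiSum 1 ψ =
      Fintype.card F - 1 - ∑ ψ ∈ mulCharsOfOrderDvd F n, ψ k := by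
  rw [← add_sum_erase _ _ one_mem_mulCharsOfOrderDvd,
    ← add_sum_erase _ (fun ψ : MulChar F ℂ ↦ ψ k) one_mem_mulCharsOfOrderDvd,
    sum_congr rfl fun ψ hψ ↦ by
      rw [one_mul, jacobiSum_one_nontrivial (ne_of_mem_erase hψ), mul_neg_one],
    sum_neg_distrib, mul_one, jacobiSum_one_one, MulChar.one_apply hk.isUnit]
  ring

lemma sum_jacobiSum_of_ne_one (hχ : χ ∈ mulCharsOfOrderDvd F n) (hχ₁ : χ ≠ 1) {k : F}
    (hk : k ≠ 0) :
    ∑ ψ ∈ mulCharsOfOrderDvd F n, (χ * ψ) k * jacobiSum χ ψ =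
      -χ k - χ (-1) + ∑ ψ ∈ ((mulCharsOfOrderDvd F n).erase 1).erase χ⁻¹,
        (χ * ψ) k * jacobiSum χ ψ := by
  have hinv : χ⁻¹ ∈ (mulCharsOfOrderDvd F n).erase 1 :=
    mem_erase.mpr ⟨inv_ne_one.mpr hχ₁, inv_mem_mulCharsOfOrderDvd hχ⟩
  rw [← add_sum_erase _ _ one_mem_mulCharsOfOrderDvd, ← add_sum_erase _ _ hinv,
    jacobiSum_comm χ 1, jacobiSum_one_nontrivial hχ₁, jacobiSum_nontrivial_inv hχ₁,
    mul_inv_cancel, MulChar.one_apply hk.isUnit, mul_one]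
  ring

lemma norm_sum_jacobiSum_le (hn : n ≠ 0) {k : F} (hk : k ≠ 0) :
    ‖∑ χ ∈ (mulCharsOfOrderDvd F n).erase 1,
        ∑ ψ ∈ ((mulCharsOfOrderDvd F n).erase 1).erase χ⁻¹, (χ * ψ) k * jacobiSum χ ψ‖ ≤
      ((n - 1) * (n - 2) : ℕ) * √(Fintype.card F) := by
  set X := (mulCharsOfOrderDvd F n).erase 1
  have hX : #X = #(mulCharsOfOrderDvd F n) - 1 := card_erase_of_mem one_mem_mulCharsOfOrderDvd
  have hXn : #X ≤ n - 1 := by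
    have := (card_mulCharsOfOrderDvd (F := F) hn).trans_le (card_nthRootsFinset_le n 1)
    omega
  have hrow : ∀ χ ∈ X, ‖∑ ψ ∈ X.erase χ⁻¹, (χ * ψ) k * jacobiSum χ ψ‖ ≤
      (n - 2 : ℕ) * √(Fintype.card F) := by
    intro χ hχ
    have hχ₁ := ne_of_mem_erase hχ
    have hinv : χ⁻¹ ∈ X :=
      mem_erase.mpr ⟨inv_ne_one.mpr hχ₁, inv_mem_mulCharsOfOrderDvd (mem_of_mem_erase hχ)⟩
    have hterm : ∀ ψ ∈ X.erase χ⁻¹, ‖(χ * ψ) k * jacobiSum χ ψ‖ = √(Fintype.card F) := by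
      intro ψ hψ
      have hχψ : χ * ψ ≠ 1 := fun h ↦ ne_of_mem_erase hψ (eq_inv_of_mul_eq_one_right h)
      rw [norm_mul, MulChar.norm_apply_eq_one _ hk, one_mul,
        norm_jacobiSum hχ₁ (ne_of_mem_erase (mem_of_mem_erase hψ)) hχψ]
    calc _ ≤ ∑ ψ ∈ X.erase χ⁻¹, ‖(χ * ψ) k * jacobiSum χ ψ‖ := norm_sum_le _ _
      _ = #(X.erase χ⁻¹) * √(Fintype.card F) := by
        rw [sum_congr rfl hterm, sum_const, nsmul_eq_mul]
      _ ≤ (n - 2 : ℕ) * √(Fintype.card F) := by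
        gcongr
        rw [card_erase_of_mem hinv]
        omega
  calc _ ≤ ∑ χ ∈ X, ‖∑ ψ ∈ X.erase χ⁻¹, (χ * ψ) k * jacobiSum χ ψ‖ := norm_sum_le _ _
    _ ≤ #X * ((n - 2 : ℕ) * √(Fintype.card F)) := by
      rw [← nsmul_eq_mul]
      exact sum_le_card_nsmul _ _ _ hrow
    _ ≤ ((n - 1) * (n - 2) : ℕ) * √(Fintype.card F) := by
      rw [← mul_assoc, Nat.cast_mul]
      gcongr

variable [DecidableEq F]

lemma card_nthRootsFinset_eq (hn : n ≠ 0) (a : F) :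
    (#(nthRootsFinset n a) : ℂ) =
      (if a = 0 then 1 else 0) + ∑ χ ∈ mulCharsOfOrderDvd F n, χ a := by
  by_cases ha : a = 0
  · simp [ha, nthRootsFinset_zero_right hn, MulChar.map_zero]
  · simp [ha, sum_mulCharsOfOrderDvd_apply hn ha]

lemma card_pow_add_pow_eq (hn : n ≠ 0) (k : F) :
    #{xy : F × F | xy.1 ^ n + xy.2 ^ n = k} =
      ∑ a, #(nthRootsFinset n a) * #(nthRootsFinset n (k - a)) := by
  rw [card_eq_sum_card_fiberwise (f := fun xy ↦ xy.1 ^ n) (t := univ)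
    fun _ _ ↦ mem_coe.mpr (mem_univ _)]
  refine sum_congr rfl fun a _ ↦ ?_
  rw [← card_product]
  congr 1
  ext ⟨x, y⟩
  simp only [mem_filter, mem_univ, true_and, mem_product,
    mem_nthRootsFinset (Nat.pos_of_ne_zero hn)]
  constructor
  · rintro ⟨h, rfl⟩
    exact ⟨rfl, eq_sub_of_add_eq' h⟩
  · rintro ⟨rfl, h⟩
    exact ⟨add_eq_of_eq_sub' h, rfl⟩

lemma card_pow_add_pow_eq_sum_jacobiSum (hn : n ≠ 0) {k : F} (hk : k ≠ 0) :
    (#{xy : F × F | xy.1 ^ n + xy.2 ^ n = k} : ℂ) =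
      2 * ∑ χ ∈ mulCharsOfOrderDvd F n, χ k +
        ∑ χ ∈ mulCharsOfOrderDvd F n, ∑ ψ ∈ mulCharsOfOrderDvd F n,
          (χ * ψ) k * jacobiSum χ ψ := by
  have hS : ∀ a, (∑ χ ∈ mulCharsOfOrderDvd F n, χ a) *
      ∑ ψ ∈ mulCharsOfOrderDvd F n, ψ (k - a) =
        ∑ χ ∈ mulCharsOfOrderDvd F n, ∑ ψ ∈ mulCharsOfOrderDvd F n, χ a * ψ (k - a) :=
    fun a ↦ sum_mul_sum ..
  rw [card_pow_add_pow_eq hn, Nat.cast_sum]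
  simp only [Nat.cast_mul, card_nthRootsFinset_eq hn, add_mul, mul_add, sum_add_distrib, hS]
  rw [sum_comm, sum_congr rfl fun χ _ ↦ sum_comm]
  -- the cross terms `[a = 0] S(k - a)` and `S(a) [a = k]` each give `S(k)`
  simp only [sub_eq_zero, eq_comm (a := k), mul_ite, mul_one, mul_zero, sum_ite_eq', mem_univ,
    if_true, hk.symm, if_false, zero_add, ite_mul, one_mul, zero_mul, sub_zero,
    sum_apply_mul_apply_sub _ _ hk]
  ring

theorem card_pow_add_pow_add_card_nthRootsFinset_neg_one (hn : n ≠ 0) {k : F} (hk : k ≠ 0) :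
    (#{xy : F × F | xy.1 ^ n + xy.2 ^ n = k} + #(nthRootsFinset n (-1 : F)) : ℂ) =
      Fintype.card F + 1 + ∑ χ ∈ (mulCharsOfOrderDvd F n).erase 1,
        ∑ ψ ∈ ((mulCharsOfOrderDvd F n).erase 1).erase χ⁻¹, (χ * ψ) k * jacobiSum χ ψ := by
  have hsub : ∀ a : F, a ≠ 0 →
      ∑ χ ∈ (mulCharsOfOrderDvd F n).erase 1, χ a = ∑ χ ∈ mulCharsOfOrderDvd F n, χ a - 1 :=
    fun a ha ↦ by rw [sum_erase_eq_sub one_mem_mulCharsOfOrderDvd, MulChar.one_apply ha.isUnit]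
  have hneg : (-1 : F) ≠ 0 := neg_ne_zero.mpr one_ne_zero
  rw [card_pow_add_pow_eq_sum_jacobiSum hn hk, ← add_sum_erase _
    (fun χ ↦ ∑ ψ ∈ mulCharsOfOrderDvd F n, (χ * ψ) k * jacobiSum χ ψ) one_mem_mulCharsOfOrderDvd,
    sum_jacobiSum_one hk,
    sum_congr rfl fun χ hχ ↦ sum_jacobiSum_of_ne_one (mem_of_mem_erase hχ) (ne_of_mem_erase hχ) hk,
    sum_add_distrib, sum_sub_distrib, sum_neg_distrib, hsub k hk, hsub (-1) hneg,
    card_nthRootsFinset_eq hn, if_neg hneg]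
  ring

theorem abs_card_pow_add_pow_add_card_nthRootsFinset_neg_one_sub_le (hn : n ≠ 0) {k : F}
    (hk : k ≠ 0) :
    |(#{xy : F × F | xy.1 ^ n + xy.2 ^ n = k} + #(nthRootsFinset n (-1 : F)) : ℝ) -
        (Fintype.card F + 1)| ≤ ((n - 1) * (n - 2) : ℕ) * √(Fintype.card F) := by
  rw [← Real.norm_eq_abs, ← Complex.norm_real]
  push_cast
  rw [card_pow_add_pow_add_card_nthRootsFinset_neg_one hn hk, add_sub_cancel_left]
  exact_mod_cast norm_sum_jacobiSum_le hn hk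

end FiniteField

theorem solvable_mod_large_prime_general (k : ℕ) (p : ℕ) (hp : p.Prime)
    (hp400 : 400 < p) (hpk : ¬ p ∣ 6 * k) :
    ∃ x y z : ZMod p, ¬(x = 0 ∧ y = 0 ∧ z = 0) ∧ x ^ 6 + y ^ 6 = (k : ZMod p) * z ^ 6 := by
  have := Fact.mk hp
  have hk : (k : ZMod p) ≠ 0 := by
    rw [Ne, ZMod.natCast_eq_zero_iff]
    exact fun h ↦ hpk (dvd_mul_of_dvd_right h 6)
  by_contra! hnone
  have haffine : #{xy : ZMod p × ZMod p | xy.1 ^ 6 + xy.2 ^ 6 = k} = 0 :=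
    card_eq_zero.mpr <| filter_eq_empty_iff.mpr fun xy _ h ↦
      hnone xy.1 xy.2 1 (by simp) (by rw [h, one_pow, mul_one])
  have hinfinity : #(nthRootsFinset 6 (-1 : ZMod p)) = 0 :=
    card_eq_zero.mpr <| eq_empty_of_forall_notMem fun x hx ↦
      hnone x 1 0 (by simp) (by rw [(mem_nthRootsFinset (by norm_num) _).mp hx]; ring)
  have hbound :=
    abs_card_pow_add_pow_add_card_nthRootsFinset_neg_one_sub_le (n := 6) (by norm_num) hk
  rw [haffine, hinfinity, ZMod.card] at hbound
  have hsqrt : √(p : ℝ) ^ 2 = p := Real.sq_sqrt (Nat.cast_nonneg p)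
  have hp' : (400 : ℝ) < p := by exact_mod_cast hp400
  norm_num at hbound
  nlinarith [neg_le_abs (-1 + -(p : ℝ)), Real.sqrt_nonneg (p : ℝ)]

/-- If `k` is a positive integer and `p > 400` is a prime not dividing `6k`, then
`x^6 + y^6 = k·z^6` has a nontrivial solution over `ℤ/pℤ`. -/
theorem solvable_mod_large_prime (k : ℕ) (hk : 0 < k) (p : ℕ) (hp : p.Prime)
    (hp400 : 400 < p) (hpk : ¬ p ∣ 6 * k) :
    ∃ x y z : ZMod p, ¬(x = 0 ∧ y = 0 ∧ z = 0) ∧ x ^ 6 + y ^ 6 = (k : ZMod p) * z ^ 6 :=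
  solvable_mod_large_prime_general k p hp hp400 hpk
end

section
/- Let k be a positive sixth-power-free integer such that for every prime p there exist x, y, z ∈ ℚ_p, not all zero, with x^6 + y^6 = k·z^6. Then k ≡ 1 or 2 (mod 7), k ≡ 1 or 2 (mod 8), and k ≡ 1 or 2 (mod 9). -/
/-!
Scaling a nontrivial `ℚ_p`-solution gives a `ℤ_p`-solution with a unit coordinate. Modulo `p ^ e`
with `e ≤ 6`, the sixth power of a non-unit vanishes, and the sixth power of a unit is `1` as soon
as the unit group of `ZMod (p ^ e)` has exponent dividing `6`, which is the case for `7`, `8` and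
`9`. The equation then reads `ε₁ + ε₂ = k ε₃` with `εᵢ ∈ {0, 1}` not all zero: `ε₃ = 0` is
impossible because `1` and `2` are nonzero mod `p ^ e`, and `ε₁ = ε₂ = 0` would force `p ^ 6 ∣ k`.
-/

namespace PadicInt

variable {p : ℕ} [Fact p.Prime]

theorem exists_eq_mul_primitive {ι : Type*} [Finite ι] (v : ι → ℚ_[p]) (hv : v ≠ 0) :
    ∃ w : ℚ_[p], w ≠ 0 ∧ ∃ u : ι → ℤ_[p], (∃ i, IsUnit (u i)) ∧ ∀ i, v i = w * u i := by
  obtain ⟨j, hj⟩ : ∃ j, v j ≠ 0 := Function.ne_iff.mp hv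
  have : Nonempty ι := ⟨j⟩
  obtain ⟨i, hmax⟩ := Finite.exists_max (fun i => ‖v i‖)
  have hi : v i ≠ 0 := fun h => hj (norm_le_zero_iff.mp (by simpa [h] using hmax j))
  have hnorm : ∀ j, ‖v j / v i‖ ≤ 1 := fun j => by
    rw [norm_div]; exact div_le_one_of_le₀ (hmax j) (norm_nonneg _)
  refine ⟨v i, hi, fun j => ⟨v j / v i, hnorm j⟩, ⟨i, ?_⟩, fun j => ?_⟩
  · exact isUnit_iff.mpr (by simp [div_self hi])
  · simp [mul_div_cancel₀ _ hi]

theorem exists_primitive_of_add_pow_eq {n k : ℕ} {x y z : ℚ_[p]}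
    (h0 : ¬(x = 0 ∧ y = 0 ∧ z = 0)) (h : x ^ n + y ^ n = k * z ^ n) :
    ∃ a b c : ℤ_[p], (IsUnit a ∨ IsUnit b ∨ IsUnit c) ∧ a ^ n + b ^ n = k * c ^ n := by
  have hv : ![x, y, z] ≠ 0 := by simpa [funext_iff, Fin.forall_fin_succ] using h0
  obtain ⟨w, hw, u, ⟨i, hi⟩, hu⟩ := exists_eq_mul_primitive ![x, y, z] hv
  refine ⟨u 0, u 1, u 2, by fin_cases i <;> simp_all, Subtype.coe_injective ?_⟩
  have hx : x = w * u 0 := hu 0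
  have hy : y = w * u 1 := hu 1
  have hz : z = w * u 2 := hu 2
  apply mul_left_cancel₀ (pow_ne_zero n hw)
  push_cast
  rw [hx, hy, hz] at h
  linear_combination h

theorem toZModPow_pow_eq_zero_of_not_isUnit {e n : ℕ} (he : e ≤ n) {t : ℤ_[p]}
    (ht : ¬IsUnit t) : toZModPow e t ^ n = 0 := by
  obtain ⟨s, rfl⟩ := (norm_lt_one_iff_dvd t).mp (not_isUnit_iff.mp ht)
  have : ((p ^ n : ℕ) : ZMod (p ^ e)) = 0 :=
    (ZMod.natCast_eq_zero_iff _ _).mpr (pow_dvd_pow p he)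
  rw [map_mul, mul_pow, map_natCast, ← Nat.cast_pow, this, zero_mul]

theorem toZModPow_pow_eq_one_of_isUnit {e n : ℕ} (hexp : ∀ u : (ZMod (p ^ e))ˣ, u ^ n = 1)
    {t : ℤ_[p]} (ht : IsUnit t) : toZModPow e t ^ n = 1 := by
  obtain ⟨u, rfl⟩ := ht
  simpa using congrArg Units.val (hexp (Units.map (toZModPow e).toMonoidHom u))

theorem pow_dvd_of_not_isUnit_of_isUnit {n k : ℕ} {a b c : ℤ_[p]}
    (h : a ^ n + b ^ n = k * c ^ n) (ha : ¬IsUnit a) (hb : ¬IsUnit b) (hc : IsUnit c) :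
    p ^ n ∣ k := by
  have h' := congrArg (toZModPow n) h
  simp only [map_add, map_mul, map_pow, map_natCast,
    toZModPow_pow_eq_zero_of_not_isUnit le_rfl ha,
    toZModPow_pow_eq_zero_of_not_isUnit le_rfl hb, add_zero] at h'
  rw [← ZMod.natCast_eq_zero_iff]
  exact ((hc.map _).pow n).mul_left_eq_zero.mp h'.symm

theorem mod_eq_one_or_two_of_primitive {n e k : ℕ} (he : e ≤ n)
    (hexp : ∀ u : (ZMod (p ^ e))ˣ, u ^ n = 1) (h2 : 2 < p ^ e) (hk : ¬p ^ n ∣ k)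
    {a b c : ℤ_[p]} (hu : IsUnit a ∨ IsUnit b ∨ IsUnit c) (h : a ^ n + b ^ n = k * c ^ n) :
    k % p ^ e = 1 ∨ k % p ^ e = 2 := by
  classical
  have hpow : ∀ t : ℤ_[p], toZModPow e t ^ n = if IsUnit t then 1 else 0 := fun t => by
    split_ifs with ht
    exacts [toZModPow_pow_eq_one_of_isUnit hexp ht, toZModPow_pow_eq_zero_of_not_isUnit he ht]
  have h' := congrArg (toZModPow e) h
  simp only [map_add, map_mul, map_pow, map_natCast, hpow] at h'
  have : Fact (1 < p ^ e) := ⟨by omega⟩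
  have h2' : (2 : ZMod (p ^ e)) ≠ 0 := by
    exact_mod_cast (ZMod.natCast_eq_zero_iff 2 _).not.mpr (Nat.not_dvd_of_pos_of_lt two_pos h2)
  suffices hk12 : (k : ZMod (p ^ e)) = 1 ∨ (k : ZMod (p ^ e)) = 2 by
    have hcast (r : ℕ) (hr : r < p ^ e) : (k : ZMod (p ^ e)) = r ↔ k % p ^ e = r := by
      rw [ZMod.natCast_eq_natCast_iff', Nat.mod_eq_of_lt hr]
    rw [← hcast 1 (by omega), ← hcast 2 h2]
    exact_mod_cast hk12
  by_cases hc : IsUnit c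
  · have hab : IsUnit a ∨ IsUnit b := by
      by_contra! hab
      exact hk (pow_dvd_of_not_isUnit_of_isUnit h hab.1 hab.2 hc)
    rw [if_pos hc, mul_one] at h'
    rw [← h']
    split_ifs with ha hb hb <;> simp_all [one_add_one_eq_two]
  · rw [if_neg hc, mul_zero] at h'
    split_ifs at h' with ha hb hb <;> simp_all [one_add_one_eq_two]

end PadicInt

theorem residues_of_locally_solvable_general (k : ℕ)
    (hsf : ¬ ∃ m : ℕ, 1 < m ∧ m ^ 6 ∣ k)
    (hloc : ∀ (p : ℕ) [Fact p.Prime],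
      ∃ x y z : ℚ_[p], ¬(x = 0 ∧ y = 0 ∧ z = 0) ∧ x ^ 6 + y ^ 6 = (k : ℚ_[p]) * z ^ 6) :
    (k % 7 = 1 ∨ k % 7 = 2) ∧ (k % 8 = 1 ∨ k % 8 = 2) ∧ (k % 9 = 1 ∨ k % 9 = 2) := by
  have hmod (p e : ℕ) [hp : Fact p.Prime] (he : e ≤ 6)
      (hexp : ∀ u : (ZMod (p ^ e))ˣ, u ^ 6 = 1) (h2 : 2 < p ^ e) :
      k % p ^ e = 1 ∨ k % p ^ e = 2 := by
    obtain ⟨x, y, z, h0, hxyz⟩ := hloc p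
    obtain ⟨a, b, c, hu, habc⟩ := PadicInt.exists_primitive_of_add_pow_eq h0 hxyz
    have hk : ¬p ^ 6 ∣ k := fun hdvd => hsf ⟨p, hp.out.one_lt, hdvd⟩
    exact PadicInt.mod_eq_one_or_two_of_primitive he hexp h2 hk hu habc
  have : Fact (Nat.Prime 7) := ⟨by norm_num⟩
  exact ⟨hmod 7 1 (by norm_num) (by decide) (by norm_num),
    hmod 2 3 (by norm_num) (by decide) (by norm_num),
    hmod 3 2 (by norm_num) (by decide) (by norm_num)⟩

/-- If `k` is a positive sixth-power-free integer such that `x^6 + y^6 = k·z^6` has a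
nontrivial solution over `ℚ_p` for every prime `p`, then `k ≡ 1` or `2 (mod 7)`,
`k ≡ 1` or `2 (mod 8)`, and `k ≡ 1` or `2 (mod 9)`. -/
theorem residues_of_locally_solvable (k : ℕ) (hk : 0 < k)
    (hsf : ¬ ∃ m : ℕ, 1 < m ∧ m ^ 6 ∣ k)
    (hloc : ∀ (p : ℕ) [Fact p.Prime],
      ∃ x y z : ℚ_[p], ¬(x = 0 ∧ y = 0 ∧ z = 0) ∧ x ^ 6 + y ^ 6 = (k : ℚ_[p]) * z ^ 6) :
    (k % 7 = 1 ∨ k % 7 = 2) ∧ (k % 8 = 1 ∨ k % 8 = 2) ∧ (k % 9 = 1 ∨ k % 9 = 2) :=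
  residues_of_locally_solvable_general k hsf hloc
end

section
/- Let k be a rational number and let x, y ∈ ℚ with x ≠ 0, y ≠ 0, and x^6 + y^6 = k. Then ((−k^2·x^6 + k^2·y^6)/(x^3·y^3))^2 = (k^2/(x^2·y^2))^3 − 4k^4; that is, the point (k^2/(x^2 y^2), k^2(y^6 − x^6)/(x^3 y^3)) lies on the elliptic curve Y^2 = X^3 − 4k^4. -/
/-- If `x^6 + y^6 = k` with `x, y ≠ 0`, then `(k^2/(x^2 y^2), k^2(y^6 − x^6)/(x^3 y^3))`
lies on the elliptic curve `Y^2 = X^3 − 4k^4`. -/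
theorem map_to_Eneg4k4 (k x y : ℚ) (hx : x ≠ 0) (hy : y ≠ 0) (h : x ^ 6 + y ^ 6 = k) :
    ((-(k ^ 2) * x ^ 6 + k ^ 2 * y ^ 6) / (x ^ 3 * y ^ 3)) ^ 2
      = (k ^ 2 / (x ^ 2 * y ^ 2)) ^ 3 - 4 * k ^ 4 := by
  subst h
  field_simp
  ring
end
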